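/- arXiv:2511.10117 — 2 statements merged into one kernel-verified Lean document; each statement's English description precedes it below -/
import Mathlib

section
/- Suppose ζ : ℝ≥0 → ℝ is given by ζ(t) = ζ₀·exp(-∫₀ᵗ b) + c·∫₀ᵗ exp(-∫ₛᵗ b)·b(s)·τ(s) ds, where b : ℝ≥0 → ℝ is nonnegative and locally integrable, and |τ(s)| ≤ T for all s. Then |ζ(t)| ≤ |ζ₀|·exp(-∫₀ᵗ b) + |c|·T·(1 - exp(-∫₀ᵗ b)) for all t ≥ 0. -/
/-!
For `b ≥ 0` the kernel `s ↦ exp (-∫ₛᵗ b) * b s` is nonnegative and is the almost-everywhere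
derivative of the absolutely continuous function `s ↦ exp (-∫ₛᵗ b)`, so by the fundamental
theorem of calculus for absolutely continuous functions its mass on `[0, t]` is exactly
`1 - exp (-∫₀ᵗ b)`. Bounding `|τ|` by `T` under the integral and applying the triangle
inequality gives the estimate.
-/

open MeasureTheory Set Filter Real
open scoped Interval

theorem LipschitzOnWith.comp_absolutelyContinuousOnInterval {X Y : Type*} [PseudoMetricSpace X]
    [PseudoMetricSpace Y] {g : X → Y} {K : NNReal} {s : Set X} {f : ℝ → X} {a b : ℝ}
    (hg : LipschitzOnWith K g s) (hf : AbsolutelyContinuousOnInterval f a b)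
    (hfs : MapsTo f (uIcc a b) s) : AbsolutelyContinuousOnInterval (g ∘ f) a b := by
  have hK : Tendsto _ _ (nhds ((K : ℝ) * 0)) := Tendsto.const_mul (K : ℝ) hf
  rw [mul_zero] at hK
  refine squeeze_zero' (Eventually.of_forall fun E ↦ Finset.sum_nonneg fun _ _ ↦ dist_nonneg)
    ?_ hK
  filter_upwards [mem_inf_of_right (mem_principal_self _)] with E hE
  rw [Finset.mul_sum]
  exact Finset.sum_le_sum fun i hi ↦
    hg.dist_le_mul _ (hfs (hE.1 i hi).1) _ (hfs (hE.1 i hi).2)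

theorem AbsolutelyContinuousOnInterval.exp {f : ℝ → ℝ} {a b : ℝ}
    (hf : AbsolutelyContinuousOnInterval f a b) :
    AbsolutelyContinuousOnInterval (fun x ↦ Real.exp (f x)) a b := by
  obtain ⟨R, hR⟩ :=
    (isCompact_uIcc.image_of_continuousOn hf.continuousOn).isBounded.subset_closedBall 0
  obtain ⟨K, hK⟩ := contDiff_exp.contDiffOn.exists_lipschitzOnWith one_ne_zero
    (convex_closedBall 0 R) (isCompact_closedBall 0 R)
  exact hK.comp_absolutelyContinuousOnInterval hf fun x hx ↦ hR (mem_image_of_mem f hx)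

theorem IntervalIntegrable.absolutelyContinuousOnInterval_exp_neg_integral {b : ℝ → ℝ} {a t : ℝ}
    (hb : IntervalIntegrable b volume a t) :
    AbsolutelyContinuousOnInterval (fun s ↦ Real.exp (-∫ ξ in s..t, b ξ)) a t := by
  simpa only [intervalIntegral.integral_symm t, neg_neg] using
    (hb.absolutelyContinuousOnInterval_intervalIntegral right_mem_uIcc).exp

theorem integral_exp_neg_integral_mul {b : ℝ → ℝ} {a t : ℝ}
    (hb : IntervalIntegrable b volume a t) :
    ∫ s in a..t, Real.exp (-∫ ξ in s..t, b ξ) * b s = 1 - Real.exp (-∫ ξ in a..t, b ξ) := by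
  have hderiv : ∀ᵐ s, s ∈ Ι a t →
      deriv (fun x ↦ Real.exp (-∫ ξ in x..t, b ξ)) s = Real.exp (-∫ ξ in s..t, b ξ) * b s := by
    filter_upwards [hb.ae_hasDerivAt_integral] with s hs hsI
    simp only [intervalIntegral.integral_symm t, neg_neg]
    exact (hs (uIoc_subset_uIcc hsI) t right_mem_uIcc).exp.deriv
  rw [← intervalIntegral.integral_congr_ae hderiv,
    hb.absolutelyContinuousOnInterval_exp_neg_integral.integral_deriv_eq_sub,
    intervalIntegral.integral_same, neg_zero, Real.exp_zero]

theorem abs_integral_exp_neg_integral_mul_le {b τ : ℝ → ℝ} {a t T : ℝ} (hat : a ≤ t)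
    (hb : IntervalIntegrable b volume a t) (hb_nonneg : ∀ s ∈ Ioc a t, 0 ≤ b s)
    (hτ : ∀ s ∈ Ioc a t, |τ s| ≤ T) :
    |∫ s in a..t, Real.exp (-∫ ξ in s..t, b ξ) * b s * τ s| ≤
      T * (1 - Real.exp (-∫ ξ in a..t, b ξ)) := by
  have hweight : IntervalIntegrable (fun s ↦ Real.exp (-∫ ξ in s..t, b ξ) * b s) volume a t :=
    hb.continuousOn_mul hb.absolutelyContinuousOnInterval_exp_neg_integral.continuousOn
  calc |∫ s in a..t, Real.exp (-∫ ξ in s..t, b ξ) * b s * τ s|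
      ≤ ∫ s in a..t, Real.exp (-∫ ξ in s..t, b ξ) * b s * T := by
        rw [← Real.norm_eq_abs]
        refine intervalIntegral.norm_integral_le_of_norm_le hat
          (Eventually.of_forall fun s hs ↦ ?_) (hweight.mul_const T)
        rw [Real.norm_eq_abs, abs_mul, abs_of_nonneg (by positivity [hb_nonneg s hs])]
        exact mul_le_mul_of_nonneg_left (hτ s hs) (by positivity [hb_nonneg s hs])
    _ = T * (1 - Real.exp (-∫ ξ in a..t, b ξ)) := by
        rw [intervalIntegral.integral_mul_const, integral_exp_neg_integral_mul hb, mul_comm]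

theorem variation_of_constants_bound
    (ζ0 c T : ℝ) (b τ ζ : ℝ → ℝ)
    (hb : ∀ t, 0 ≤ t → 0 ≤ b t)
    (hloc : MeasureTheory.LocallyIntegrableOn b (Set.Ici 0))
    (hτ : ∀ s, 0 ≤ s → |τ s| ≤ T)
    (hζ : ∀ t, 0 ≤ t →
      ζ t = ζ0 * Real.exp (-(∫ ξ in (0:ℝ)..t, b ξ)) +
        c * ∫ s in (0:ℝ)..t, Real.exp (-(∫ ξ in s..t, b ξ)) * b s * τ s) :
    ∀ t, 0 ≤ t →
      |ζ t| ≤ |ζ0| * Real.exp (-(∫ ξ in (0:ℝ)..t, b ξ)) +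
        |c| * T * (1 - Real.exp (-(∫ ξ in (0:ℝ)..t, b ξ))) := by
  intro t ht
  have hbt : IntervalIntegrable b volume 0 t :=
    (hloc.integrableOn_compact_subset (by simp [uIcc_of_le ht, Icc_subset_Ici_self])
      isCompact_uIcc).intervalIntegrable
  have hI := abs_integral_exp_neg_integral_mul_le ht hbt (fun s hs ↦ hb s hs.1.le)
    (fun s hs ↦ hτ s hs.1.le)
  rw [hζ t ht]
  calc _ ≤ |ζ0 * Real.exp (-∫ ξ in (0:ℝ)..t, b ξ)| +
        |c * ∫ s in (0:ℝ)..t, Real.exp (-∫ ξ in s..t, b ξ) * b s * τ s| := abs_add_le _ _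
    _ ≤ _ := by
        rw [abs_mul, abs_mul, abs_of_pos (Real.exp_pos _), mul_assoc |c|]
        gcongr
end

section
/- Let K = diag(k₁,k₂) with k₁,k₂ > 0 and define V(ζ) = ½ ζᵀ K⁻¹ ζ on ℝ². Along trajectories of ζ' = -K·S·gᵀ·W·(τ̄ + g·S·ζ), where g = [[1,1],[0,-1],[-1,0]], W = diag(w₁,w₂,w₃) with wᵢ > 0, and S = diag(σ₁,σ₂) with σᵢ ∈ {0,1}, the derivative satisfies V'(ζ) = -(Sζ)ᵀ (gᵀ W g)(Sζ) - (Sζ)ᵀ gᵀ W τ̄ ≤ -α‖Sζ‖² + β‖Sζ‖, where α = λ_min(gᵀWg) > 0 and β = ‖gᵀW‖·‖τ̄‖. -/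
/-!
Because K⁻¹ is symmetric, V' = ζᵀ K⁻¹ ζ'; the factor K of the dynamics cancels, and moving the
symmetric S across the dot product yields the exact form of V'. The quadratic term is bounded below
through the spectral decomposition of gᵀWg, which is positive definite since W is and g has a left
inverse; the linear term is bounded by Cauchy–Schwarz and the L2 operator norm.
-/

open Matrix
open scoped Matrix.Norms.L2Operator

noncomputable def gMat : Matrix (Fin 3) (Fin 2) ℝ := !![1, 1; 0, -1; -1, 0]

namespace Matrix

variable {R n m : Type*} [Fintype n]

theorem IsSymm.dotProduct_mulVec_eq_mulVec_dotProduct [CommSemiring R] {S : Matrix n n R}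
    (hS : S.IsSymm) (x y : n → R) : x ⬝ᵥ S *ᵥ y = S *ᵥ x ⬝ᵥ y := by
  rw [dotProduct_mulVec, ← mulVec_transpose, hS.eq]

theorem IsSymm.dotProduct_mulVec_comm [CommSemiring R] {S : Matrix n n R} (hS : S.IsSymm)
    (x y : n → R) :
    x ⬝ᵥ S *ᵥ y = y ⬝ᵥ S *ᵥ x := by
  rw [hS.dotProduct_mulVec_eq_mulVec_dotProduct, dotProduct_comm]

theorem mulVec_injective_of_mul_eq_one [Semiring R] [Fintype m] [DecidableEq n]
    {L : Matrix n m R} {A : Matrix m n R} (hLA : L * A = 1) : Function.Injective A.mulVec :=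
  Function.LeftInverse.injective (g := (L *ᵥ ·)) fun x => by
    simp only [mulVec_mulVec, hLA, one_mulVec]

end Matrix

section Calculus

variable {n m : Type*} [Fintype n] {f g : ℝ → n → ℝ} {f' g' : n → ℝ} {t : ℝ}

theorem HasDerivAt.dotProduct (hf : HasDerivAt f f' t) (hg : HasDerivAt g g' t) :
    HasDerivAt (fun s => f s ⬝ᵥ g s) (f' ⬝ᵥ g t + f t ⬝ᵥ g') t := by
  simp only [_root_.dotProduct, ← Finset.sum_add_distrib]
  exact HasDerivAt.fun_sum fun i _ => (hasDerivAt_pi.1 hf i).mul (hasDerivAt_pi.1 hg i)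

theorem HasDerivAt.mulVec (A : Matrix m n ℝ) (hf : HasDerivAt f f' t) :
    HasDerivAt (fun s => A *ᵥ f s) (A *ᵥ f') t :=
  hasDerivAt_pi.2 fun i =>
    ((hasDerivAt_const t (A i)).dotProduct hf).congr_deriv (by rw [zero_dotProduct, zero_add]; rfl)

theorem HasDerivAt.half_dotProduct_mulVec_self {A : Matrix n n ℝ} (hA : A.IsSymm)
    (hf : HasDerivAt f f' t) :
    HasDerivAt (fun s => 1 / 2 * (f s ⬝ᵥ A *ᵥ f s)) (f t ⬝ᵥ A *ᵥ f') t :=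
  ((hf.dotProduct (hf.mulVec A)).const_mul (1 / 2 : ℝ)).congr_deriv <| by
    rw [hA.dotProduct_mulVec_comm f']
    ring

end Calculus

section Quadratic

variable {n m : Type*} [Fintype n] [Fintype m]

theorem Matrix.IsHermitian.mul_dotProduct_self_le [DecidableEq n] {A : Matrix n n ℝ}
    (hA : A.IsHermitian) {c : ℝ} (hc : ∀ i, c ≤ hA.eigenvalues i) (x : n → ℝ) :
    c * (x ⬝ᵥ x) ≤ x ⬝ᵥ A *ᵥ x := by
  set U : Matrix n n ℝ := (hA.eigenvectorUnitary : Matrix n n ℝ)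
  have hUU : U * Uᵀ = 1 := mem_unitaryGroup_iff.mp hA.eigenvectorUnitary.2
  have hA' : A = U * diagonal hA.eigenvalues * Uᵀ := hA.spectral_theorem
  set y := Uᵀ *ᵥ x
  have hx : x ⬝ᵥ x = y ⬝ᵥ y := by
    rw [dotProduct_mulVec, ← mulVec_transpose, transpose_transpose, mulVec_mulVec, hUU,
      one_mulVec]
  have hq : x ⬝ᵥ A *ᵥ x = y ⬝ᵥ diagonal hA.eigenvalues *ᵥ y := by
    conv_lhs => rw [hA', ← mulVec_mulVec, ← mulVec_mulVec, dotProduct_mulVec x U,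
      ← mulVec_transpose]
  rw [hx, hq]
  simp only [_root_.dotProduct, mulVec_diagonal, Finset.mul_sum]
  exact Finset.sum_le_sum fun i _ => by nlinarith [hc i, mul_self_nonneg (y i)]

theorem abs_dotProduct_mulVec_le_l2_opNorm [DecidableEq m] (x : n → ℝ) (B : Matrix n m ℝ)
    (v : m → ℝ) :
    |x ⬝ᵥ B *ᵥ v| ≤ ‖B‖ * ‖WithLp.toLp 2 v‖ * ‖WithLp.toLp 2 x‖ :=
  calc |x ⬝ᵥ B *ᵥ v| = |inner ℝ (WithLp.toLp 2 (B *ᵥ v)) (WithLp.toLp 2 x)| := by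
        rw [EuclideanSpace.inner_toLp_toLp, star_trivial]
    _ ≤ ‖WithLp.toLp 2 (B *ᵥ v)‖ * ‖WithLp.toLp 2 x‖ := abs_real_inner_le_norm _ _
    _ ≤ ‖B‖ * ‖WithLp.toLp 2 v‖ * ‖WithLp.toLp 2 x‖ := by
        gcongr
        exact l2_opNorm_mulVec B (WithLp.toLp 2 v)

theorem neg_dotProduct_mulVec_sub_le [DecidableEq n] [DecidableEq m] {A : Matrix n n ℝ}
    (hA : A.IsHermitian) {c : ℝ} (hc : ∀ i, c ≤ hA.eigenvalues i) (B : Matrix n m ℝ)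
    (v : m → ℝ) (x : n → ℝ) :
    -(x ⬝ᵥ A *ᵥ x) - x ⬝ᵥ B *ᵥ v ≤
      -c * ‖WithLp.toLp 2 x‖ ^ 2 + ‖B‖ * ‖WithLp.toLp 2 v‖ * ‖WithLp.toLp 2 x‖ := by
  have hquad := hA.mul_dotProduct_self_le hc x
  have hlin := neg_le_of_abs_le (abs_dotProduct_mulVec_le_l2_opNorm x B v)
  have hnorm : ‖WithLp.toLp 2 x‖ ^ 2 = x ⬝ᵥ x := by
    rw [← real_inner_self_eq_norm_sq, EuclideanSpace.inner_toLp_toLp, star_trivial]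
  rw [hnorm]
  linarith

end Quadratic

theorem dotProduct_inv_mulVec_allocation {n m : Type*} [Fintype n] [Fintype m] [DecidableEq n]
    {K S : Matrix n n ℝ} (hK : IsUnit K) (hS : S.IsSymm) (g : Matrix m n ℝ) (W : Matrix m m ℝ)
    (τ : m → ℝ) (ζ : n → ℝ) :
    ζ ⬝ᵥ K⁻¹ *ᵥ -(K *ᵥ (S *ᵥ (gᵀ *ᵥ (W *ᵥ (τ + g *ᵥ (S *ᵥ ζ)))))) =
      -(S *ᵥ ζ ⬝ᵥ (gᵀ * W * g) *ᵥ (S *ᵥ ζ)) - S *ᵥ ζ ⬝ᵥ (gᵀ * W) *ᵥ τ := by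
  rw [mulVec_neg, mulVec_mulVec _ K⁻¹ K, nonsing_inv_mul K ((isUnit_iff_isUnit_det K).1 hK),
    one_mulVec, dotProduct_neg, hS.dotProduct_mulVec_eq_mulVec_dotProduct]
  simp only [mulVec_add, mulVec_mulVec, dotProduct_add, Matrix.mul_assoc]
  ring

theorem gMat_mulVec_injective : Function.Injective gMat.mulVec :=
  mulVec_injective_of_mul_eq_one (L := !![0, 0, -1; 0, -1, 0]) <| by
    ext i j
    fin_cases i <;> fin_cases j <;> simp [gMat]

theorem posDef_gMat_transpose_mul_diagonal_mul {w : Fin 3 → ℝ} (hw : ∀ i, 0 < w i) :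
    (gMatᵀ * diagonal w * gMat).PosDef := by
  simpa [conjTranspose_eq_transpose_of_trivial] using
    (PosDef.diagonal hw).conjTranspose_mul_mul_same gMat_mulVec_injective

theorem lyapunov_dissipation_general
    (k : Fin 2 → ℝ) (w : Fin 3 → ℝ)
    (hk : ∀ i, 0 < k i) (hw : ∀ i, 0 < w i)
    (σ : Fin 2 → ℝ)
    (K : Matrix (Fin 2) (Fin 2) ℝ) (hK : K = Matrix.diagonal k)
    (W : Matrix (Fin 3) (Fin 3) ℝ) (hW : W = Matrix.diagonal w)
    (S : Matrix (Fin 2) (Fin 2) ℝ) (hS : S = Matrix.diagonal σ)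
    (τbar : Fin 3 → ℝ)
    (ζ : ℝ → (Fin 2 → ℝ))
    (hζ : ∀ t, HasDerivAt ζ
      (-(K.mulVec (S.mulVec (gMat.transpose.mulVec
        (W.mulVec (τbar + gMat.mulVec (S.mulVec (ζ t)))))))) t)
    (hM : (gMat.transpose * W * gMat).IsHermitian)
    (α β : ℝ)
    (hα : α = min (hM.eigenvalues 0) (hM.eigenvalues 1))
    (hβ : β = ‖gMat.transpose * W‖ * ‖(WithLp.equiv 2 (Fin 3 → ℝ)).symm τbar‖) :
    0 < α ∧
    ∀ t : ℝ,
      HasDerivAt (fun s => (1 / 2) * (ζ s ⬝ᵥ K⁻¹.mulVec (ζ s)))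
        (-(S.mulVec (ζ t) ⬝ᵥ (gMat.transpose * W * gMat).mulVec (S.mulVec (ζ t)))
          - S.mulVec (ζ t) ⬝ᵥ (gMat.transpose * W).mulVec τbar) t ∧
      (-(S.mulVec (ζ t) ⬝ᵥ (gMat.transpose * W * gMat).mulVec (S.mulVec (ζ t)))
          - S.mulVec (ζ t) ⬝ᵥ (gMat.transpose * W).mulVec τbar) ≤
        -α * ‖(WithLp.equiv 2 (Fin 2 → ℝ)).symm (S.mulVec (ζ t))‖ ^ 2 +
          β * ‖(WithLp.equiv 2 (Fin 2 → ℝ)).symm (S.mulVec (ζ t))‖ := by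
  subst hK hW hS hα hβ
  have hMpd := posDef_gMat_transpose_mul_diagonal_mul hw
  have hK : IsUnit (diagonal k) := isUnit_diagonal.2 (Pi.isUnit_iff.2 fun i => (hk i).ne'.isUnit)
  have hmin : ∀ i, min (hM.eigenvalues 0) (hM.eigenvalues 1) ≤ hM.eigenvalues i :=
    Fin.forall_fin_two.2 ⟨min_le_left _ _, min_le_right _ _⟩
  refine ⟨lt_min (hMpd.eigenvalues_pos 0) (hMpd.eigenvalues_pos 1), fun t => ⟨?_, ?_⟩⟩
  · exact ((hζ t).half_dotProduct_mulVec_self (isSymm_diagonal k).inv).congr_deriv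
      (dotProduct_inv_mulVec_allocation hK (isSymm_diagonal σ) gMat _ τbar (ζ t))
  · exact neg_dotProduct_mulVec_sub_le hM hmin _ τbar _

theorem lyapunov_dissipation
    (k : Fin 2 → ℝ) (w : Fin 3 → ℝ)
    (hk : ∀ i, 0 < k i) (hw : ∀ i, 0 < w i)
    (σ : Fin 2 → ℝ) (hσ : ∀ i, σ i = 0 ∨ σ i = 1)
    (K : Matrix (Fin 2) (Fin 2) ℝ) (hK : K = Matrix.diagonal k)
    (W : Matrix (Fin 3) (Fin 3) ℝ) (hW : W = Matrix.diagonal w)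
    (S : Matrix (Fin 2) (Fin 2) ℝ) (hS : S = Matrix.diagonal σ)
    (τbar : Fin 3 → ℝ)
    (ζ : ℝ → (Fin 2 → ℝ))
    (hζ : ∀ t, HasDerivAt ζ
      (-(K.mulVec (S.mulVec (gMat.transpose.mulVec
        (W.mulVec (τbar + gMat.mulVec (S.mulVec (ζ t)))))))) t)
    (hM : (gMat.transpose * W * gMat).IsHermitian)
    (α β : ℝ)
    (hα : α = min (hM.eigenvalues 0) (hM.eigenvalues 1))
    (hβ : β = ‖gMat.transpose * W‖ * ‖(WithLp.equiv 2 (Fin 3 → ℝ)).symm τbar‖) :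
    0 < α ∧
    ∀ t : ℝ,
      HasDerivAt (fun s => (1 / 2) * (ζ s ⬝ᵥ K⁻¹.mulVec (ζ s)))
        (-(S.mulVec (ζ t) ⬝ᵥ (gMat.transpose * W * gMat).mulVec (S.mulVec (ζ t)))
          - S.mulVec (ζ t) ⬝ᵥ (gMat.transpose * W).mulVec τbar) t ∧
      (-(S.mulVec (ζ t) ⬝ᵥ (gMat.transpose * W * gMat).mulVec (S.mulVec (ζ t)))
          - S.mulVec (ζ t) ⬝ᵥ (gMat.transpose * W).mulVec τbar) ≤
        -α * ‖(WithLp.equiv 2 (Fin 2 → ℝ)).symm (S.mulVec (ζ t))‖ ^ 2 +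
          β * ‖(WithLp.equiv 2 (Fin 2 → ℝ)).symm (S.mulVec (ζ t))‖ :=
  lyapunov_dissipation_general k w hk hw σ K hK W hW S hS τbar ζ hζ hM α β hα hβ
end
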